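/- arXiv:2504.10850 — 4 statements merged into one kernel-verified Lean document; each statement's English description precedes it below -/
import Mathlib

section
/- Let H be a real inner product space, X a measurable space, Y a countable label space, and q a probability measure on X × Y. Let f_en : X → H be an encoder, a : X → X a measurable adversarial perturbation map, and for each y ∈ Y let g_y : H → ℝ be M_C-Lipschitz (g_y represents the downstream loss z ↦ −log p̂_T(y | f_de(z))). Fix t₀ < 1 and suppose that for q-almost every (x, y): f_en(x) and f_en(a(x)) are unit vectors; ⟨f_en(x), f_en(a(x))⟩ ≤ t₀; there are finitely many negative embeddings n_1(x), …, n_m(x) ∈ H whose partition sum S(x) := Σ_{j=1}^m exp(⟨f_en(x), n_j(x)⟩) satisfies S(x) ≥ e(e+1). Assume the functions (x,y) ↦ g_y(f_en(x)), (x,y) ↦ g_y(f_en(a(x))) and x ↦ log S(x) − ⟨f_en(x), f_en(a(x))⟩ are q-integrable. Then ∫ g_y(f_en(a(x))) dq(x,y) ≤ ∫ g_y(f_en(x)) dq(x,y) + κ · ∫ (log S(x) − ⟨f_en(x), f_en(a(x))⟩) dq(x,y), where κ = √2 · e · M_C / (√(1 − t₀) · log(1 + e)). -/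
open MeasureTheory
open scoped NNReal RealInnerProductSpace

/-- deterministic-encoder form of the paper's Theorem 1: the
downstream adversarial loss is upper bounded by the downstream clean loss plus
`κ` times the adversarial contrastive loss, where
`κ = √2 · e · M_C / (√(1 - t₀) · log(1 + e))`. -/
theorem downstream_adversarial_loss_bound
    {H : Type*} [NormedAddCommGroup H] [InnerProductSpace ℝ H]
    {X : Type*} [MeasurableSpace X]
    {Y : Type*} [MeasurableSpace Y] [Countable Y]
    (q : Measure (X × Y)) [IsProbabilityMeasure q]
    (f_en : X → H) (a : X → X) (ha : Measurable a)
    (M_C : ℝ≥0) (g : Y → H → ℝ) (hg : ∀ y, LipschitzWith M_C (g y))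
    (t₀ : ℝ) (ht₀ : t₀ < 1)
    (m : ℕ) (n : X → Fin m → H)
    -- partition sum of the negative embeddings
    (S : X → ℝ) (hS_def : ∀ x, S x = ∑ j, Real.exp ⟪f_en x, n x j⟫)
    -- a.e. hypotheses on the embeddings
    (h_unit : ∀ᵐ p ∂q, ‖f_en (p : X × Y).1‖ = 1 ∧ ‖f_en (a p.1)‖ = 1)
    (h_sim : ∀ᵐ p ∂q, ⟪f_en (p : X × Y).1, f_en (a p.1)⟫ ≤ t₀)
    (h_part : ∀ᵐ p ∂q, Real.exp 1 * (Real.exp 1 + 1) ≤ S (p : X × Y).1)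
    -- integrability hypotheses
    (h_clean : Integrable (fun p : X × Y => g p.2 (f_en p.1)) q)
    (h_adv : Integrable (fun p : X × Y => g p.2 (f_en (a p.1))) q)
    (h_con : Integrable
      (fun p : X × Y => Real.log (S p.1) - ⟪f_en p.1, f_en (a p.1)⟫) q) :
    ∫ p, g p.2 (f_en (a p.1)) ∂q ≤
      ∫ p, g p.2 (f_en p.1) ∂q +
        (Real.sqrt 2 * Real.exp 1 * (M_C : ℝ) /
            (Real.sqrt (1 - t₀) * Real.log (1 + Real.exp 1))) *
          ∫ p, (Real.log (S p.1) - ⟪f_en p.1, f_en (a p.1)⟫) ∂q := by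

  set κ : ℝ := Real.sqrt 2 * Real.exp 1 * (M_C : ℝ) /
      (Real.sqrt (1 - t₀) * Real.log (1 + Real.exp 1)) with hκ
  have hden : 0 < Real.sqrt (1 - t₀) * Real.log (1 + Real.exp 1) := by
    apply mul_pos
    · exact Real.sqrt_pos.2 (by linarith)
    · exact Real.log_pos (by linarith [Real.exp_pos 1])
  have key : ∀ᵐ p ∂q, g p.2 (f_en (a p.1)) ≤ g p.2 (f_en p.1) +
      κ * (Real.log (S p.1) - ⟪f_en p.1, f_en (a p.1)⟫) := by
    filter_upwards [h_unit, h_sim, h_part] with p hunit hsim hpart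
    obtain ⟨hu, hv⟩ := hunit
    set u := f_en p.1
    set v := f_en (a p.1)
    set t : ℝ := ⟪u, v⟫ with htdef
    have habs : |t| ≤ 1 := by
      have := abs_real_inner_le_norm u v
      rwa [hu, hv, one_mul] at this
    have ht1 : t ≤ 1 := (abs_le.1 habs).2
    have htm1 : -1 ≤ t := (abs_le.1 habs).1
    have hlip : g p.2 v - g p.2 u ≤ (M_C : ℝ) * ‖v - u‖ := by
      have h := (hg p.2).dist_le_mul v u
      rw [Real.dist_eq, dist_eq_norm] at h
      exact le_trans (le_abs_self _) h
    have hnorm : ‖v - u‖ = Real.sqrt 2 * Real.sqrt (1 - t) := by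
      have hi : ⟪v, u⟫ = t := (real_inner_comm u v).trans htdef.symm
      have hsq : ‖v - u‖ ^ 2 = 2 * (1 - t) := by
        rw [norm_sub_sq_real, hu, hv, hi]
        ring
      have : ‖v - u‖ = Real.sqrt (2 * (1 - t)) := by
        rw [← hsq, Real.sqrt_sq (norm_nonneg _)]
      rw [this, Real.sqrt_mul (by norm_num)]
    -- main scalar inequality
    set M : ℝ := (M_C : ℝ)
    have hM : 0 ≤ M := M_C.coe_nonneg
    set s : ℝ := Real.sqrt (1 - t)
    set s₀ : ℝ := Real.sqrt (1 - t₀)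
    set c : ℝ := Real.log (1 + Real.exp 1) with hcdef
    set e1 : ℝ := Real.exp 1 with he1def
    have he1 : 0 < e1 := Real.exp_pos 1
    have hc0 : 0 < c := Real.log_pos (by linarith [Real.exp_pos 1])
    have hce : c ≤ e1 := by
      have := Real.log_le_sub_one_of_pos (show (0:ℝ) < 1 + e1 by positivity)
      linarith
    have hs0 : 0 ≤ s := Real.sqrt_nonneg _
    have hs₀0 : 0 ≤ s₀ := Real.sqrt_nonneg _
    have hss : s₀ ≤ s := Real.sqrt_le_sqrt (by linarith)
    have hs2 : s ^ 2 = 1 - t := Real.sq_sqrt (by linarith)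
    have hSpos : 0 < S p.1 := lt_of_lt_of_le (by positivity) hpart
    have hL : 1 + c ≤ Real.log (S p.1) := by
      have h1 : Real.log (e1 * (e1 + 1)) ≤ Real.log (S p.1) :=
        Real.log_le_log (by positivity) hpart
      have h2 : Real.log (e1 * (e1 + 1)) = 1 + c := by
        rw [Real.log_mul (ne_of_gt he1) (by positivity), he1def, Real.log_exp,
          hcdef, add_comm e1 1]
      linarith
    set L : ℝ := Real.log (S p.1)
    have key1 : (1 - t) * c ≤ e1 * (L - t) := by
      nlinarith [mul_nonneg (sub_nonneg.2 ht1) (sub_nonneg.2 hce),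
        mul_le_mul_of_nonneg_left hL he1.le]
    have key2 : s * (s₀ * c) ≤ (1 - t) * c := by
      nlinarith [mul_le_mul_of_nonneg_left
        (mul_le_mul_of_nonneg_right hss hc0.le) hs0]
    have hmain : M * ‖v - u‖ ≤ κ * (L - t) := by
      rw [hnorm, hκ, div_mul_eq_mul_div, le_div_iff₀ hden]
      calc M * (Real.sqrt 2 * s) * (s₀ * c)
          = (M * Real.sqrt 2) * (s * (s₀ * c)) := by ring
        _ ≤ (M * Real.sqrt 2) * ((1 - t) * c) := by
            apply mul_le_mul_of_nonneg_left key2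
            positivity
        _ ≤ (M * Real.sqrt 2) * (e1 * (L - t)) := by
            apply mul_le_mul_of_nonneg_left key1
            positivity
        _ = Real.sqrt 2 * e1 * M * (L - t) := by ring
    linarith
  have hrhs : Integrable (fun p : X × Y => g p.2 (f_en p.1) +
      κ * (Real.log (S p.1) - ⟪f_en p.1, f_en (a p.1)⟫)) q :=
    h_clean.add (h_con.const_mul κ)
  have := integral_mono_ae h_adv hrhs key
  rwa [integral_add h_clean (h_con.const_mul κ), integral_const_mul] at this
end

section
/- Let H be a real normed space, X a measurable space, Y a countable label space, and q a probability measure on X × Y. Let f_en : X → H, let a : X → X be a measurable map, and for each y ∈ Y let g_y : H → ℝ be M_C-Lipschitz. Assume the functions (x,y) ↦ g_y(f_en(x)), (x,y) ↦ g_y(f_en(a(x))) and x ↦ ‖f_en(a(x)) − f_en(x)‖ are q-integrable. Then ∫ g_y(f_en(a(x))) dq(x,y) ≤ ∫ g_y(f_en(x)) dq(x,y) + M_C · ∫ ‖f_en(a(x)) − f_en(x)‖ dq(x,y). -/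
open MeasureTheory
open scoped NNReal

/-- The expected adversarial downstream loss exceeds the expected
clean downstream loss by at most the Lipschitz constant `M_C` times the
expected perturbation of the encoder's embedding. -/
theorem adversarial_loss_le_clean_loss_add_embedding_shift
    {H : Type*} [NormedAddCommGroup H] [NormedSpace ℝ H]
    {X : Type*} [MeasurableSpace X]
    {Y : Type*} [MeasurableSpace Y] [Countable Y]
    (q : Measure (X × Y)) [IsProbabilityMeasure q]
    (f_en : X → H) (a : X → X) (ha : Measurable a)
    (M_C : ℝ≥0) (g : Y → H → ℝ) (hg : ∀ y, LipschitzWith M_C (g y))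
    (h_clean : Integrable (fun p : X × Y => g p.2 (f_en p.1)) q)
    (h_adv : Integrable (fun p : X × Y => g p.2 (f_en (a p.1))) q)
    (h_norm : Integrable (fun p : X × Y => ‖f_en (a p.1) - f_en p.1‖) q) :
    ∫ p, g p.2 (f_en (a p.1)) ∂q ≤
      ∫ p, g p.2 (f_en p.1) ∂q +
        (M_C : ℝ) * ∫ p, ‖f_en (a p.1) - f_en p.1‖ ∂q := by
  have key : ∀ p : X × Y, g p.2 (f_en (a p.1)) ≤
      g p.2 (f_en p.1) + (M_C : ℝ) * ‖f_en (a p.1) - f_en p.1‖ := by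
    intro p
    have h := (hg p.2).dist_le_mul (f_en (a p.1)) (f_en p.1)
    rw [Real.dist_eq, dist_eq_norm] at h
    have := (abs_le.mp h).2
    linarith
  calc ∫ p, g p.2 (f_en (a p.1)) ∂q
      ≤ ∫ p, (g p.2 (f_en p.1) + (M_C : ℝ) * ‖f_en (a p.1) - f_en p.1‖) ∂q := by
        exact integral_mono h_adv (h_clean.add (h_norm.const_mul _)) key
    _ = ∫ p, g p.2 (f_en p.1) ∂q + (M_C : ℝ) * ∫ p, ‖f_en (a p.1) - f_en p.1‖ ∂q := by
        rw [integral_add h_clean (h_norm.const_mul _), integral_const_mul]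
end

section
/- Let H be a real inner product space, let u, v ∈ H be unit vectors, let t₀ < 1 satisfy ⟨u, v⟩ ≤ t₀, and let w_1, …, w_m ∈ H be vectors whose partition sum S := Σ_{j=1}^m exp(⟨u, w_j⟩) satisfies S ≥ e(e+1). Then ‖u − v‖ ≤ (√2 · e / (√(1 − t₀) · log(1 + e))) · (log S − ⟨u, v⟩). -/
open scoped RealInnerProductSpace

/-- For unit vectors `u`, `v` with `⟪u, v⟫ ≤ t₀ < 1` and negative
embeddings `w j` whose partition sum `S = ∑ j, exp ⟪u, w j⟫` satisfies
`S ≥ e(e+1)`, the distance `‖u - v‖` is bounded by a constant multiple of the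
adversarial contrastive loss `log S - ⟪u, v⟫`. -/
theorem dist_le_contrastive_loss
    {H : Type*} [NormedAddCommGroup H] [InnerProductSpace ℝ H]
    (u v : H) (hu : ‖u‖ = 1) (hv : ‖v‖ = 1)
    (t₀ : ℝ) (ht₀ : t₀ < 1) (huv : ⟪u, v⟫ ≤ t₀)
    (m : ℕ) (w : Fin m → H)
    (hS : Real.exp 1 * (Real.exp 1 + 1) ≤ ∑ j, Real.exp ⟪u, w j⟫) :
    ‖u - v‖ ≤
      (Real.sqrt 2 * Real.exp 1 / (Real.sqrt (1 - t₀) * Real.log (1 + Real.exp 1)))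
        * (Real.log (∑ j, Real.exp ⟪u, w j⟫) - ⟪u, v⟫) := by
  set t : ℝ := ⟪u, v⟫ with htdef
  set S : ℝ := ∑ j, Real.exp ⟪u, w j⟫ with hSdef
  set c : ℝ := Real.log (1 + Real.exp 1) with hcdef
  have he : (0:ℝ) < Real.exp 1 := Real.exp_pos 1
  have hc0 : 0 < c := Real.log_pos (by linarith)
  have hce : c ≤ Real.exp 1 := by
    have := Real.log_le_sub_one_of_pos (show (0:ℝ) < 1 + Real.exp 1 by linarith)
    simpa [hcdef] using this
  have ht1 : t ≤ 1 := by
    have := real_inner_le_norm u v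
    rw [hu, hv] at this; simpa using this
  have ht0' : 0 < 1 - t₀ := by linarith
  have hS0 : (0:ℝ) < S := lt_of_lt_of_le (by positivity) hS
  have hlogS : 1 + c ≤ Real.log S := by
    have h := Real.log_le_log (by positivity) hS
    rw [Real.log_mul (ne_of_gt he) (by positivity), Real.log_exp] at h
    have : Real.exp 1 + 1 = 1 + Real.exp 1 := by ring
    rw [this] at h
    exact h
  have hnorm : ‖u - v‖ = Real.sqrt 2 * Real.sqrt (1 - t) := by
    have hsq : ‖u - v‖ ^ 2 = 2 * (1 - t) := by
      rw [norm_sub_sq_real, hu, hv, ← htdef]; ring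
    rw [← Real.sqrt_mul (by norm_num : (0:ℝ) ≤ 2), ← hsq,
      Real.sqrt_sq (norm_nonneg _)]
  -- key bounds
  have hst : Real.sqrt (1 - t) * Real.sqrt (1 - t₀) ≤ 1 - t := by
    have h1 : Real.sqrt (1 - t₀) ≤ Real.sqrt (1 - t) :=
      Real.sqrt_le_sqrt (by linarith)
    calc Real.sqrt (1 - t) * Real.sqrt (1 - t₀)
        ≤ Real.sqrt (1 - t) * Real.sqrt (1 - t) := by
          exact mul_le_mul_of_nonneg_left h1 (Real.sqrt_nonneg _)
      _ = 1 - t := Real.mul_self_sqrt (by linarith)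
  have hlin : c * (1 - t) ≤ Real.exp 1 * (Real.log S - t) := by
    nlinarith [hlogS, hce, ht1, hc0]
  have key : Real.sqrt (1 - t) * Real.sqrt (1 - t₀) * c
      ≤ Real.exp 1 * (Real.log S - t) := by
    calc Real.sqrt (1 - t) * Real.sqrt (1 - t₀) * c ≤ (1 - t) * c :=
          mul_le_mul_of_nonneg_right hst (le_of_lt hc0)
      _ = c * (1 - t) := by ring
      _ ≤ _ := hlin
  have hpos : 0 < Real.sqrt (1 - t₀) * c :=
    mul_pos (Real.sqrt_pos.mpr ht0') hc0
  rw [hnorm, div_mul_eq_mul_div, le_div_iff₀ hpos]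
  have hs2 : (0:ℝ) ≤ Real.sqrt 2 := Real.sqrt_nonneg 2
  nlinarith [key, hs2, Real.sqrt_nonneg (1 - t), Real.sqrt_nonneg (1 - t₀)]
end

section
/- Fix d ≥ 1, ε > 0, δ ∈ (0, 1/2], N ≥ 1, a countable label space Y, points x_1, …, x_N ∈ ℝ^d whose pairwise Euclidean distances exceed 2ε, and labels y_1, …, y_N ∈ Y. Then there exists a function p : ℝ^d × Y → (0, 1] such that: (i) p(x_i, y_i) = 1 − δ for every i, so the average clean cross-entropy loss satisfies (1/N) Σ_{i=1}^N (−log p(x_i, y_i)) = −log(1 − δ) ≤ 2δ; and (ii) for every i there exists x' with ‖x' − x_i‖ ≤ ε and p(x', y_i) = δ, so the average adversarial cross-entropy loss satisfies (1/N) Σ_{i=1}^N sup_{‖x' − x_i‖ ≤ ε} (−log p(x', y_i)) ≥ −log δ. In particular, the adversarial loss is at least log(1/δ), which exceeds the clean loss −log(1 − δ). -/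
open scoped BigOperators

/-- construction underlying the paper's Proposition 2: for
well-separated points there is a classifier with near-perfect clean
cross-entropy loss but adversarial cross-entropy loss at least `-log δ`. -/
theorem brittle_classifier_exists
    (d N : ℕ) (hd : 1 ≤ d) (hN : 1 ≤ N)
    (ε δ : ℝ) (hε : 0 < ε) (hδ0 : 0 < δ) (hδ1 : δ ≤ 1 / 2)
    {Y : Type*} [Countable Y]
    (x : Fin N → EuclideanSpace ℝ (Fin d))
    (h_sep : ∀ i j, i ≠ j → 2 * ε < dist (x i) (x j))
    (y : Fin N → Y) :
    ∃ p : EuclideanSpace ℝ (Fin d) × Y → ℝ,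
      (∀ z, 0 < p z ∧ p z ≤ 1) ∧
      -- (i) clean predictions and clean loss
      (∀ i, p (x i, y i) = 1 - δ) ∧
      ((1 / (N : ℝ)) * ∑ i, (-Real.log (p (x i, y i))) = -Real.log (1 - δ)) ∧
      (-Real.log (1 - δ) ≤ 2 * δ) ∧
      -- (ii) adversarial predictions and adversarial loss
      (∀ i, ∃ x' : EuclideanSpace ℝ (Fin d),
        dist x' (x i) ≤ ε ∧ p (x', y i) = δ) ∧
      (-Real.log δ ≤ (1 / (N : ℝ)) * ∑ i,
        sSup ((fun x' => -Real.log (p (x', y i))) ''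
          {x' : EuclideanSpace ℝ (Fin d) | dist x' (x i) ≤ ε})) ∧
      -- in particular the adversarial loss bound exceeds the clean loss
      (-Real.log (1 - δ) ≤ -Real.log δ) := by
  classical
  have hδ1' : δ ≤ 1 - δ := by linarith
  have h1δ : 0 < 1 - δ := by linarith
  have h1δ1 : 1 - δ ≤ 1 := by linarith
  set v : EuclideanSpace ℝ (Fin d) := EuclideanSpace.single ⟨0, hd⟩ ε with hv
  have hvnorm : ‖v‖ = ε := by
    rw [hv, EuclideanSpace.norm_single, Real.norm_eq_abs, abs_of_pos hε]
  set S : Set (EuclideanSpace ℝ (Fin d)) := Set.range (fun i => x i + v) with hS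
  set p : EuclideanSpace ℝ (Fin d) × Y → ℝ :=
    fun z => if z.1 ∈ S then δ else 1 - δ with hp
  have hrange : ∀ z, p z = δ ∨ p z = 1 - δ := by
    intro z; by_cases h : z.1 ∈ S <;> simp [hp, h]
  have hpos : ∀ z, 0 < p z ∧ p z ≤ 1 := by
    intro z
    rcases hrange z with h | h <;> rw [h] <;> constructor <;> linarith
  have hge : ∀ z, δ ≤ p z := by
    intro z; rcases hrange z with h | h <;> rw [h] <;> linarith
  have hnotS : ∀ i, x i ∉ S := by
    intro i ⟨j, hj⟩
    have hdist : dist (x i) (x j) = ε := by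
      rw [dist_eq_norm]
      have hj' : x j + v = x i := hj
      rw [← hj', add_sub_cancel_left, hvnorm]
    rcases eq_or_ne i j with rfl | hne
    · simp at hdist; linarith
    · have := h_sep i j (fun h => hne h)
      rw [hdist] at this; linarith
  have hclean : ∀ i, p (x i, y i) = 1 - δ := by
    intro i; simp [hp, hnotS i]
  have hlog : Real.log (1 - δ) ≤ Real.log δ + 0 → True := fun _ => trivial
  have hloglog : -Real.log (1 - δ) ≤ -Real.log δ := by
    have := Real.log_le_log hδ0 hδ1'
    linarith
  have hNne : (N : ℝ) ≠ 0 := by positivity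
  refine ⟨p, hpos, hclean, ?_, ?_, ?_, ?_, hloglog⟩
  · rw [Finset.sum_congr rfl (fun i _ => by rw [hclean i]),
      Finset.sum_const, Finset.card_univ, Fintype.card_fin, nsmul_eq_mul]
    field_simp
  · -- -log(1-δ) ≤ 2δ : 1-δ ≥ exp(-2δ)
    have hexp : Real.exp (-(2 * δ)) ≤ 1 - δ := by
      have h1 : 1 + 2 * δ ≤ Real.exp (2 * δ) := by have := Real.add_one_le_exp (2 * δ); linarith
      have h2 : Real.exp (-(2 * δ)) = (Real.exp (2 * δ))⁻¹ := by
        rw [Real.exp_neg]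
      rw [h2]
      have h3 : (Real.exp (2 * δ))⁻¹ ≤ (1 + 2 * δ)⁻¹ := by
        apply inv_anti₀ (by linarith) h1
      refine h3.trans ?_
      rw [inv_le_iff_one_le_mul₀ (by linarith)]
      nlinarith
    have := Real.log_le_log (Real.exp_pos _) hexp
    rw [Real.log_exp] at this
    linarith
  · intro i
    refine ⟨x i + v, ?_, ?_⟩
    · rw [dist_eq_norm]
      have : x i + v - x i = v := by abel
      rw [this, hvnorm]
    · have : x i + v ∈ S := ⟨i, rfl⟩
      simp [hp, this]
  · have hterm : ∀ i : Fin N,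
        sSup ((fun x' => -Real.log (p (x', y i))) ''
          {x' : EuclideanSpace ℝ (Fin d) | dist x' (x i) ≤ ε}) = -Real.log δ := by
      intro i
      apply le_antisymm
      · apply csSup_le
        · refine ⟨-Real.log (p (x i, y i)), ⟨x i, by simp [hε.le], rfl⟩⟩
        · rintro b ⟨x', _, rfl⟩
          have := Real.log_le_log hδ0 (hge (x', y i))
          show -Real.log (p (x', y i)) ≤ -Real.log δ
          linarith
      · apply le_csSup
        · refine ⟨-Real.log δ, ?_⟩
          rintro b ⟨x', _, rfl⟩
          have := Real.log_le_log hδ0 (hge (x', y i))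
          show -Real.log (p (x', y i)) ≤ -Real.log δ
          linarith
        · refine ⟨x i + v, ?_, ?_⟩
          · show dist (x i + v) (x i) ≤ ε
            rw [dist_eq_norm]
            have : x i + v - x i = v := by abel
            rw [this, hvnorm]
          · have : x i + v ∈ S := ⟨i, rfl⟩
            simp [hp, this]
    rw [Finset.sum_congr rfl (fun i _ => hterm i),
      Finset.sum_const, Finset.card_univ, Fintype.card_fin, nsmul_eq_mul]
    rw [one_div, inv_mul_cancel_left₀ hNne]
end
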